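/- arXiv:2108.00415 — 4 statements merged into one kernel-verified Lean document; each statement's English description precedes it below -/
import Mathlib

section
/- Let f, g : Bool × Bool × Bool → Bool be local rules of elementary cellular automata and suppose f ≤ₖ g with witnessing encoding enc : Bool → Bool^k. Then for every l ≥ 3 and every Boolean sequence c of length l, applying enc entrywise to f̃(c) gives the same sequence as applying g̃^k to the entrywise encoding of c; that is, ē(f̃(c)) = g̃^k(ē(c)). -/
/-- The unravelling of a local rule `f`: it maps a sequence `(b₁,…,bₙ)` (for `n ≥ 3`) to
`(f(b₁,b₂,b₃), f(b₂,b₃,b₄), …, f(b_{n-2},b_{n-1},bₙ))` of length `n - 2`. -/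
def unravel {S : Type*} (f : S × S × S → S) : List S → List S
  | a :: b :: c :: rest => f (a, b, c) :: unravel f (b :: c :: rest)
  | _ => []

/-- Entrywise encoding `ē`: replace each entry by its block and concatenate. -/
def ebar {S T : Type*} (e : S → List T) (c : List S) : List T :=
  (c.map e).flatten

/-- `f ≤ₖ g`: the ECA rule `f` is emulated by `g` with supercell size `k`. -/
def Emulates (f g : Bool × Bool × Bool → Bool) (k : ℕ) : Prop :=
  ∃ enc : Bool → List Bool, Function.Injective enc ∧ (∀ b, (enc b).length = k) ∧
    ∀ s₁ s₂ s₃ : Bool,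
      enc (f (s₁, s₂, s₃)) = (unravel g)^[k] (enc s₁ ++ enc s₂ ++ enc s₃)

/-!
Each cell of `g̃ᵏ(w)` depends only on the `2k + 1` cells of `w` above it, so `g̃ᵏ` commutes with
`drop n` and its first `n` cells are computed from the first `n + 2k` cells of `w`. Since every
block of `ē(c)` has length `k`, the first block of `g̃ᵏ(ē(a :: b :: c :: t))` is
`g̃ᵏ(enc a ++ enc b ++ enc c) = enc (f (a, b, c))`, and the rest is `g̃ᵏ(ē(b :: c :: t))`,
which is handled by induction on the configuration.
-/

section Unravel

variable {S : Type*} (f : S × S × S → S)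

@[simp]
lemma unravel_cons_cons_cons (a b c : S) (t : List S) :
    unravel f (a :: b :: c :: t) = f (a, b, c) :: unravel f (b :: c :: t) := by
  rw [unravel]

lemma length_unravel : ∀ w : List S, (unravel f w).length = w.length - 2
  | [] | [_] | [_, _] => by simp [unravel]
  | _ :: b :: c :: t => by simp [length_unravel (b :: c :: t)]

lemma unravel_take : ∀ (w : List S) (n : ℕ), (unravel f w).take n = unravel f (w.take (n + 2))
  | [], _ | [_], _ | [_, _], _ => by simp [unravel]
  | _ :: _ :: _ :: _, 0 => by simp [unravel]
  | _ :: b :: c :: t, n + 1 => by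
    simp [List.take_succ_cons, unravel_take (b :: c :: t) n]

lemma unravel_tail : ∀ w : List S, (unravel f w).tail = unravel f w.tail
  | [] | [_] | [_, _] | _ :: _ :: _ :: _ => rfl

lemma unravel_drop (w : List S) (n : ℕ) : (unravel f w).drop n = unravel f (w.drop n) := by
  induction n generalizing w with
  | zero => rfl
  | succ n ih => rw [← List.drop_drop, ← List.drop_drop, List.drop_one, List.drop_one,
      ih, unravel_tail]

lemma length_iterate_unravel (k : ℕ) (w : List S) :
    ((unravel f)^[k] w).length = w.length - 2 * k := by
  induction k generalizing w with
  | zero => rfl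
  | succ k ih => rw [Function.iterate_succ_apply, ih, length_unravel]; omega

lemma iterate_unravel_take (k : ℕ) (w : List S) (n : ℕ) :
    ((unravel f)^[k] w).take n = (unravel f)^[k] (w.take (n + 2 * k)) := by
  induction k generalizing w n with
  | zero => simp
  | succ k ih =>
    rw [Function.iterate_succ_apply, ih, unravel_take, Function.iterate_succ_apply]
    ring_nf

lemma iterate_unravel_drop (k : ℕ) (w : List S) (n : ℕ) :
    ((unravel f)^[k] w).drop n = (unravel f)^[k] (w.drop n) := by
  induction k generalizing w with
  | zero => rfl
  | succ k ih =>
    rw [Function.iterate_succ_apply, ih, unravel_drop, Function.iterate_succ_apply]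

lemma iterate_unravel_eq_append (k : ℕ) (w : List S) (n : ℕ) :
    (unravel f)^[k] w = (unravel f)^[k] (w.take (n + 2 * k)) ++ (unravel f)^[k] (w.drop n) := by
  rw [← iterate_unravel_take, ← iterate_unravel_drop, List.take_append_drop]

end Unravel

section Ebar

variable {S T : Type*} (e : S → List T)

@[simp]
lemma ebar_cons (a : S) (c : List S) : ebar e (a :: c) = e a ++ ebar e c := by
  simp [ebar]

lemma length_ebar {k : ℕ} (he : ∀ s, (e s).length = k) (c : List S) :
    (ebar e c).length = k * c.length := by
  induction c with
  | nil => rfl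
  | cons a c ih => simp [ih, he, Nat.mul_succ, Nat.add_comm]

end Ebar

theorem ebar_unravel {S T : Type*} (f : S × S × S → S) (g : T × T × T → T) (e : S → List T)
    (k : ℕ) (he : ∀ s, (e s).length = k)
    (hfg : ∀ s₁ s₂ s₃ : S, e (f (s₁, s₂, s₃)) = (unravel g)^[k] (e s₁ ++ e s₂ ++ e s₃)) :
    ∀ c : List S, ebar e (unravel f c) = (unravel g)^[k] (ebar e c)
  | a :: b :: c :: t => by
    have hfirst : (ebar e (a :: b :: c :: t)).take (k + 2 * k) = e a ++ e b ++ e c := by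
      rw [ebar_cons, ebar_cons, ebar_cons, show k + 2 * k = (e a).length + ((e b).length + k)
        by simp only [he]; ring, List.take_length_add_append, List.take_length_add_append,
        ← he c, List.take_left, List.append_assoc]
    have hrest : (ebar e (a :: b :: c :: t)).drop k = ebar e (b :: c :: t) := by
      rw [ebar_cons, ← he a, List.drop_left]
    rw [iterate_unravel_eq_append g k _ k, hfirst, hrest, ← hfg, ← ebar_unravel f g e k he hfg,
      unravel_cons_cons_cons, ebar_cons]
  | [] | [_] | [_, _] => by
    refine (List.eq_nil_of_length_eq_zero ?_).symm
    rw [length_iterate_unravel, length_ebar e he]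
    simp only [List.length_cons, List.length_nil]
    omega

theorem stmt_0_general (f g : Bool × Bool × Bool → Bool) (k : ℕ)
    (enc : Bool → List Bool)
    (henc_len : ∀ b, (enc b).length = k)
    (hwit : ∀ s₁ s₂ s₃ : Bool,
      enc (f (s₁, s₂, s₃)) = (unravel g)^[k] (enc s₁ ++ enc s₂ ++ enc s₃))
    (c : List Bool) :
    ebar enc (unravel f c) = (unravel g)^[k] (ebar enc c) :=
  ebar_unravel f g enc k henc_len hwit c

/-- if `enc` witnesses `f ≤ₖ g`, then for every configuration `c` of length
`l ≥ 3` one has `ē(f̃(c)) = g̃^k(ē(c))`. -/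
theorem stmt_0 (f g : Bool × Bool × Bool → Bool) (k : ℕ)
    (enc : Bool → List Bool)
    (henc_inj : Function.Injective enc)
    (henc_len : ∀ b, (enc b).length = k)
    (hwit : ∀ s₁ s₂ s₃ : Bool,
      enc (f (s₁, s₂, s₃)) = (unravel g)^[k] (enc s₁ ++ enc s₂ ++ enc s₃))
    (c : List Bool) (hc : 3 ≤ c.length) :
    ebar enc (unravel f c) = (unravel g)^[k] (ebar enc c) :=
  stmt_0_general f g k enc henc_len hwit c
end

section
/- ECA rule 184 can be emulated by ECA rule 148 with supercell size 2: rule 184 ≤₂ rule 148, i.e., there exists an injective encoding enc : Bool → Bool² such that enc(f₁₈₄(s₁,s₂,s₃)) = (f₁₄₈)~²(enc(s₁) ++ enc(s₂) ++ enc(s₃)) for all s₁, s₂, s₃ ∈ Bool. -/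
/-- The ECA local rule with Wolfram number `n`. -/
def ecaRule (n : ℕ) : Bool × Bool × Bool → Bool :=
  fun t => n.testBit (4 * t.1.toNat + 2 * t.2.1.toNat + t.2.2.toNat)

/-!
Encode a cell `b` as the block `0b`. Rule 148 sends `0x0 ↦ x` and `x0y ↦ x ∧ ¬y`, so one step
maps `0s₁0s₂0s₃` to `s₁ (s₁∧¬s₂) s₂ (s₂∧¬s₃)`, and a second step yields `0` followed by
`(s₁ ∧ ¬s₂) ∨ (s₂ ∧ s₃)`, which is rule 184 at `(s₁, s₂, s₃)`.
-/

def zeroPadEnc (b : Bool) : List Bool := [false, b]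

theorem zeroPadEnc_injective : Function.Injective zeroPadEnc := by
  intro a b h
  simpa [zeroPadEnc] using h

theorem unravel_ecaRule_148_zeroPadEnc (s₁ s₂ s₃ : Bool) :
    unravel (ecaRule 148) (zeroPadEnc s₁ ++ zeroPadEnc s₂ ++ zeroPadEnc s₃) =
      [s₁, s₁ && !s₂, s₂, s₂ && !s₃] := by
  revert s₁ s₂ s₃
  decide

theorem unravel_ecaRule_148_eq_zeroPadEnc_ecaRule_184 (s₁ s₂ s₃ : Bool) :
    unravel (ecaRule 148) [s₁, s₁ && !s₂, s₂, s₂ && !s₃] =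
      zeroPadEnc (ecaRule 184 (s₁, s₂, s₃)) := by
  revert s₁ s₂ s₃
  decide

/-- rule 184 can be emulated by rule 148 with supercell size 2. -/
theorem stmt_11 : Emulates (ecaRule 184) (ecaRule 148) 2 := by
  refine ⟨zeroPadEnc, zeroPadEnc_injective, fun _ => rfl, fun s₁ s₂ s₃ => ?_⟩
  rw [Function.iterate_succ_apply, Function.iterate_one, unravel_ecaRule_148_zeroPadEnc,
    unravel_ecaRule_148_eq_zeroPadEnc_ecaRule_184]
end

section
/- For each of the nonlinear ECA rules 18, 126 and 146, the linear rule 90 can be emulated by it non-trivially: for each g ∈ {rule 18, rule 126, rule 146} there exists a supercell size k with 2 ≤ k ≤ 11 such that rule 90 ≤ₖ g. -/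
/-!
All three rules emulate rule 90 with supercells of size 2. Rules 18 and 146 map
`(a, false, c)` to `a xor c` and `(false, b, false)` to `false`, so on configurations whose
even cells are `false` they act as rule 90 on the odd cells; the encoding `b ↦ [false, b]` keeps
such configurations sparse. Rule 126 maps `(a, a, c)` and `(a, c, c)` to `a xor c`, so it acts as
rule 90 on configurations made of doubled cells, which the encoding `b ↦ [b, b]` produces.
-/

theorem ecaRule_ninety_apply (a b c : Bool) : ecaRule 90 (a, b, c) = (a ^^ c) := by
  cases a <;> cases b <;> cases c <;> rfl

section

variable {g : Bool × Bool × Bool → Bool}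

theorem emulates_rule90_of_sparse (h_center : ∀ b, g (false, b, false) = false)
    (h_across : ∀ a c, g (a, false, c) = (a ^^ c)) : Emulates (ecaRule 90) g 2 := by
  refine ⟨fun b => [false, b], fun a b h => by simpa using h, fun _ => rfl, fun s₁ s₂ s₃ => ?_⟩
  have h_xor : ((s₁ ^^ s₂) ^^ (s₂ ^^ s₃)) = (s₁ ^^ s₃) := by
    cases s₁ <;> cases s₂ <;> cases s₃ <;> rfl
  simp [unravel, h_center, h_across, h_xor, ecaRule_ninety_apply]

theorem emulates_rule90_of_doubled (h_left : ∀ a c, g (a, a, c) = (a ^^ c))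
    (h_right : ∀ a c, g (a, c, c) = (a ^^ c)) : Emulates (ecaRule 90) g 2 := by
  refine ⟨fun b => [b, b], fun a b h => by simpa using h, fun _ => rfl, fun s₁ s₂ s₃ => ?_⟩
  have h_xor : ((s₁ ^^ s₂) ^^ (s₂ ^^ s₃)) = (s₁ ^^ s₃) := by
    cases s₁ <;> cases s₂ <;> cases s₃ <;> rfl
  simp [unravel, h_left, h_right, h_xor, ecaRule_ninety_apply]

end

/-- the linear rule 90 can be emulated non-trivially by each of the nonlinear
rules 18, 126 and 146, with some supercell size `2 ≤ k ≤ 11`. -/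
theorem stmt_14 :
    ∀ n ∈ ([18, 126, 146] : List ℕ),
      ∃ k : ℕ, 2 ≤ k ∧ k ≤ 11 ∧ Emulates (ecaRule 90) (ecaRule n) k := by
  intro n hn
  refine ⟨2, le_rfl, by norm_num, ?_⟩
  simp only [List.mem_cons, List.not_mem_nil, or_false] at hn
  rcases hn with rfl | rfl | rfl
  · exact emulates_rule90_of_sparse (by decide) (by decide)
  · exact emulates_rule90_of_doubled (by decide) (by decide)
  · exact emulates_rule90_of_sparse (by decide) (by decide)
end

section
/- ECA rule 146 can be emulated by the chaotic-looking rule 22 non-trivially: there exists a supercell size k with 2 ≤ k ≤ 11 such that rule 146 ≤ₖ rule 22. -/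
def zeroPadded (s : Bool) : List Bool := [false, s]

theorem zeroPadded_injective : Function.Injective zeroPadded := fun _ _ h => by
  simpa [zeroPadded] using h

theorem length_zeroPadded (s : Bool) : (zeroPadded s).length = 2 := rfl

/-- Rule 22 sets a cell iff exactly one of its three neighbours is set, so the row `0 a 0 b 0 c`
steps to `a, a ⊕ b, b, b ⊕ c` and then to `0, rule146(a, b, c)`. -/
theorem unravel_ecaRule_22_iterate_two_zeroPadded (s₁ s₂ s₃ : Bool) :
    (unravel (ecaRule 22))^[2] (zeroPadded s₁ ++ zeroPadded s₂ ++ zeroPadded s₃) =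
      zeroPadded (ecaRule 146 (s₁, s₂, s₃)) := by
  revert s₁ s₂ s₃
  decide

theorem emulates_ecaRule_146_ecaRule_22 : Emulates (ecaRule 146) (ecaRule 22) 2 :=
  ⟨zeroPadded, zeroPadded_injective, length_zeroPadded,
    fun s₁ s₂ s₃ => (unravel_ecaRule_22_iterate_two_zeroPadded s₁ s₂ s₃).symm⟩

/-- rule 146 can be emulated by rule 22 non-trivially, with some supercell size
`2 ≤ k ≤ 11`. -/
theorem stmt_15 :
    ∃ k : ℕ, 2 ≤ k ∧ k ≤ 11 ∧ Emulates (ecaRule 146) (ecaRule 22) k :=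
  ⟨2, le_rfl, by norm_num, emulates_ecaRule_146_ecaRule_22⟩
end
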